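/- arXiv:1304.5108 — 8 statements merged into one kernel-verified Lean document; each statement's English description precedes it below -/
import Mathlib

section
/- Let L be the abelian group generated by x₁, x₂, x₃ subject to the relations 2x₁ = 2x₂ = n·x₃ =: c, where n ≥ 2. Then every element x of L can be written uniquely in the form x = l₁x₁ + l₂x₂ + l₃x₃ + l·c with 0 ≤ l₁ ≤ 1, 0 ≤ l₂ ≤ 1, 0 ≤ l₃ ≤ n−1, and l ∈ ℤ. -/
/-- The subgroup of relations `2x₁ = 2x₂` and `2x₁ = n·x₃` inside ℤ³. -/
def rel (n : ℕ) : AddSubgroup (ℤ × ℤ × ℤ) :=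
  AddSubgroup.closure {(2, -2, 0), (2, 0, -(n : ℤ))}

/-- The rank one abelian group `L = ⟨x₁,x₂,x₃ | 2x₁ = 2x₂ = n·x₃⟩`. -/
abbrev L (n : ℕ) := (ℤ × ℤ × ℤ) ⧸ rel n

/-- The generator x₁ of L. -/
def x1 (n : ℕ) : L n := QuotientAddGroup.mk' (rel n) (1, 0, 0)

/-- The generator x₂ of L. -/
def x2 (n : ℕ) : L n := QuotientAddGroup.mk' (rel n) (0, 1, 0)

/-- The generator x₃ of L. -/
def x3 (n : ℕ) : L n := QuotientAddGroup.mk' (rel n) (0, 0, 1)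

/-- The canonical element c = 2x₁ (= 2x₂ = n·x₃). -/
def cc (n : ℕ) : L n := (2 : ℤ) • x1 n

/-- The dualizing element ω = c - x₁ - x₂ - x₃. -/
def om (n : ℕ) : L n := cc n - x1 n - x2 n - x3 n

/-- `x ≥ 0` in L: the coefficient of `c` in the (unique) normal form
`x = l₁x₁ + l₂x₂ + l₃x₃ + l·c` (with 0 ≤ l₁,l₂ ≤ 1, 0 ≤ l₃ ≤ n-1) is nonnegative. -/
def Nonneg (n : ℕ) (x : L n) : Prop :=
  ∃ l1 l2 l3 l : ℤ, 0 ≤ l1 ∧ l1 ≤ 1 ∧ 0 ≤ l2 ∧ l2 ≤ 1 ∧ 0 ≤ l3 ∧ l3 ≤ (n : ℤ) - 1 ∧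
    0 ≤ l ∧ x = l1 • x1 n + l2 • x2 n + l3 • x3 n + l • cc n

/-- The order on L: `x ≤ y` iff `y - x ≥ 0`. -/
def leL (n : ℕ) (x y : L n) : Prop := Nonneg n (y - x)
lemma mem_rel_iff (n : ℕ) (v : ℤ × ℤ × ℤ) :
    v ∈ rel n ↔ ∃ a b : ℤ, a • ((2:ℤ), (-2:ℤ), (0:ℤ)) + b • ((2:ℤ), (0:ℤ), -(n:ℤ)) = v := by
  rw [rel, AddSubgroup.mem_closure_pair]

lemma comb_eq (n : ℕ) (l1 l2 l3 l : ℤ) :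
    l1 • x1 n + l2 • x2 n + l3 • x3 n + l • cc n
      = QuotientAddGroup.mk' (rel n) (l1 + 2*l, l2, l3) := by
  unfold cc x1 x2 x3
  rw [smul_smul, ← map_zsmul, ← map_zsmul, ← map_zsmul, ← map_zsmul, ← map_add, ← map_add,
    ← map_add]
  congr 1
  simp [Prod.ext_iff]
  ring

/-- every element of L can be written uniquely as
`l₁x₁ + l₂x₂ + l₃x₃ + l·c` with `0 ≤ l₁ ≤ 1`, `0 ≤ l₂ ≤ 1`, `0 ≤ l₃ ≤ n-1`, `l ∈ ℤ`. -/
theorem normal_form_exists_unique (n : ℕ) (hn : 2 ≤ n) (x : L n) :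
    ∃! q : ℤ × ℤ × ℤ × ℤ,
      (0 ≤ q.1 ∧ q.1 ≤ 1) ∧ (0 ≤ q.2.1 ∧ q.2.1 ≤ 1) ∧
      (0 ≤ q.2.2.1 ∧ q.2.2.1 ≤ (n : ℤ) - 1) ∧
      x = q.1 • x1 n + q.2.1 • x2 n + q.2.2.1 • x3 n + q.2.2.2 • cc n := by
  obtain ⟨⟨p, q, r⟩, rfl⟩ := QuotientAddGroup.mk'_surjective (rel n) x
  have hn0 : (0:ℤ) < (n:ℤ) := by exact_mod_cast Nat.lt_of_lt_of_le Nat.zero_lt_two hn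
  have hne : (n:ℤ) ≠ 0 := hn0.ne'
  have h2 : p = 2 * (p / 2) + p % 2 := (Int.mul_ediv_add_emod p 2).symm
  have h3 : q = 2 * (q / 2) + q % 2 := (Int.mul_ediv_add_emod q 2).symm
  have h4 : r = (n:ℤ) * (r / (n:ℤ)) + r % (n:ℤ) := (Int.mul_ediv_add_emod r n).symm
  have hr0 : 0 ≤ r % (n:ℤ) := Int.emod_nonneg r hne
  have hr1 : r % (n:ℤ) < (n:ℤ) := Int.emod_lt_of_pos r hn0
  refine ⟨(p % 2, q % 2, r % (n:ℤ), p / 2 + q / 2 + r / (n:ℤ)), ?_, ?_⟩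
  · refine ⟨⟨by dsimp only; omega, by dsimp only; omega⟩,
      ⟨by dsimp only; omega, by dsimp only; omega⟩,
      ⟨by dsimp only; omega, by dsimp only; omega⟩, ?_⟩
    rw [comb_eq, QuotientAddGroup.mk'_eq_mk']
    refine ⟨(q/2) • ((2:ℤ), (-2:ℤ), (0:ℤ)) + (r/(n:ℤ)) • ((2:ℤ), (0:ℤ), -(n:ℤ)), ?_, ?_⟩
    · exact (mem_rel_iff n _).2 ⟨_, _, rfl⟩
    · simp only [Prod.smul_mk, Prod.mk_add_mk, Prod.ext_iff, smul_eq_mul]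
      refine ⟨by linarith, by linarith, by linarith⟩
  · rintro ⟨l1, l2, l3, l⟩ ⟨⟨h10, h11⟩, ⟨h20, h21⟩, ⟨h30, h31⟩, heq⟩
    dsimp only at h10 h11 h20 h21 h30 h31 heq
    rw [comb_eq, QuotientAddGroup.mk'_eq_mk'] at heq
    obtain ⟨z, hz, hzeq⟩ := heq
    obtain ⟨a, b, rfl⟩ := (mem_rel_iff n z).1 hz
    simp only [Prod.smul_mk, Prod.mk_add_mk, Prod.ext_iff, smul_eq_mul] at hzeq
    obtain ⟨e1, e2, e3⟩ := hzeq
    have hb : b = r / (n:ℤ) := by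
      rcases lt_trichotomy b (r / (n:ℤ)) with h | h | h
      · nlinarith [mul_le_mul_of_nonneg_left (Int.add_one_le_iff.mpr h) hn0.le]
      · exact h
      · nlinarith [mul_le_mul_of_nonneg_left (Int.add_one_le_iff.mpr h) hn0.le]
    have hl3 : l3 = r % (n:ℤ) := by
      have h5 : r + (a * 0 + b * -(n:ℤ)) = l3 := e3
      rw [hb] at h5; linarith
    have ha : a = q / 2 := by omega
    have hl1 : l1 = p % 2 := by omega
    have hl2 : l2 = q % 2 := by omega
    have hl : l = p / 2 + q / 2 + r / (n:ℤ) := by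
      have h6 := e1; rw [ha, hb] at h6; linarith
    simp [hl1, hl2, hl3, hl]
end

section
/- Let L = ⟨x₁,x₂,x₃ | 2x₁=2x₂=n x₃ = c⟩ with n ≥ 2, ordered by x ≥ 0 iff l ≥ 0 in normal form, and let δ : L → ℤ be the group homomorphism with δ(x₁)=δ(x₂)=lcm(2,n)/2 and δ(x₃)=lcm(2,n)/n. If x ∈ L satisfies −c ≤ x ≤ c and δ(x) ≥ 0, then x satisfies one of: (i) 0 ≤ x ≤ c; (ii) x = x₁ − x₂; (iii) x = xᵢ − k·x₃ for some i ∈ {1,2} and some integer k with 0 < k ≤ n/2. -/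
/-!
The homomorphisms `L → ZMod 2` reading off the coefficients of `x₁` and `x₂`, together with the
degree `L → ℤ` (`x₁, x₂ ↦ n`, `x₃ ↦ 2`), separate normal forms, so the coefficient of `c` is well
defined. Write `x + c = a₁x₁ + a₂x₂ + a₃x₃ + a c` in normal form. If `a ≥ 1` we are in case (i).
Otherwise `x = a₁x₁ + a₂x₂ + a₃x₃ - c`, and as `δ` is a positive multiple of the degree, `δ(x) ≥ 0`
reads `(a₁ + a₂) n + 2a₃ ≥ 2n`. This rules out `a₁ = a₂ = 0` and gives (iii) with `k = n - a₃` when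
`a₁ + a₂ = 1`. When `a₁ = a₂ = 1`, the bound `x ≤ c` forces `a₃ = 0`: otherwise `c - x` has normal
form `x₁ + x₂ + (n - a₃)x₃ - c`.
-/

open Set

namespace L

variable {n : ℕ} {A : Type*} [AddCommGroup A]

def lift (n : ℕ) (a₁ a₂ a₃ : A) (h₁₂ : (2 : ℤ) • a₁ = (2 : ℤ) • a₂)
    (h₁₃ : (2 : ℤ) • a₁ = (n : ℤ) • a₃) : L n →+ A :=
  QuotientAddGroup.lift (rel n)
    ((zmultiplesHom A a₁).coprod ((zmultiplesHom A a₂).coprod (zmultiplesHom A a₃))) <| by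
      rw [rel, AddSubgroup.closure_le]
      rintro g (rfl | rfl)
      · simp [h₁₂]
      · simp [h₁₃]

section lift

variable {a₁ a₂ a₃ : A} {h₁₂ : (2 : ℤ) • a₁ = (2 : ℤ) • a₂} {h₁₃ : (2 : ℤ) • a₁ = (n : ℤ) • a₃}

@[simp] theorem lift_x1 : lift n a₁ a₂ a₃ h₁₂ h₁₃ (x1 n) = a₁ := by simp [lift, x1]
@[simp] theorem lift_x2 : lift n a₁ a₂ a₃ h₁₂ h₁₃ (x2 n) = a₂ := by simp [lift, x2]
@[simp] theorem lift_x3 : lift n a₁ a₂ a₃ h₁₂ h₁₃ (x3 n) = a₃ := by simp [lift, x3]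

end lift

theorem hom_ext {f g : L n →+ A} (h₁ : f (x1 n) = g (x1 n)) (h₂ : f (x2 n) = g (x2 n))
    (h₃ : f (x3 n) = g (x3 n)) : f = g := by
  refine QuotientAddGroup.addMonoidHom_ext _ ?_
  ext ⟨a, b, c⟩
  have hdecomp : ((a, b, c) : ℤ × ℤ × ℤ) = a • (1, 0, 0) + b • (0, 1, 0) + c • (0, 0, 1) := by
    simp
  simp only [AddMonoidHom.coe_comp, Function.comp_apply, hdecomp, map_add, map_zsmul]
  rw [← x1, ← x2, ← x3, h₁, h₂, h₃]

theorem cc_eq_two_smul_x2 : cc n = (2 : ℤ) • x2 n := by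
  rw [cc, x1, x2, ← sub_eq_zero, ← map_zsmul, ← map_zsmul, ← map_sub, QuotientAddGroup.mk'_apply,
    QuotientAddGroup.eq_zero_iff]
  exact AddSubgroup.subset_closure (.inl (by simp))

theorem cc_eq_natCast_smul_x3 : cc n = (n : ℤ) • x3 n := by
  rw [cc, x1, x3, ← sub_eq_zero, ← map_zsmul, ← map_zsmul, ← map_sub, QuotientAddGroup.mk'_apply,
    QuotientAddGroup.eq_zero_iff]
  exact AddSubgroup.subset_closure (.inr (by simp))

def deg (n : ℕ) : L n →+ ℤ := lift n n n 2 rfl (mul_comm _ _)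

def parity₁ (n : ℕ) : L n →+ ZMod 2 := lift n 1 0 0 (by decide) (by rw [smul_zero]; decide)

def parity₂ (n : ℕ) : L n →+ ZMod 2 := lift n 0 1 0 (by decide) (by simp)

def normalForm (n : ℕ) (l₁ l₂ l₃ l : ℤ) : L n := l₁ • x1 n + l₂ • x2 n + l₃ • x3 n + l • cc n

theorem deg_normalForm (l₁ l₂ l₃ l : ℤ) :
    deg n (normalForm n l₁ l₂ l₃ l) = (l₁ + l₂) * n + 2 * l₃ + 2 * n * l := by
  simp [deg, normalForm, cc]
  ring

theorem parity₁_normalForm (l₁ l₂ l₃ l : ℤ) : parity₁ n (normalForm n l₁ l₂ l₃ l) = l₁ := by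
  simp [parity₁, normalForm, cc, show (2 : ZMod 2) = 0 from rfl]

theorem parity₂_normalForm (l₁ l₂ l₃ l : ℤ) : parity₂ n (normalForm n l₁ l₂ l₃ l) = l₂ := by
  simp [parity₂, normalForm, cc]

theorem eq_of_normalForm_eq {l₁ l₂ l₃ l m₁ m₂ m₃ m : ℤ} (hl₁ : l₁ ∈ Icc 0 1) (hl₂ : l₂ ∈ Icc 0 1)
    (hl₃ : l₃ ∈ Icc 0 ((n : ℤ) - 1)) (hm₁ : m₁ ∈ Icc 0 1) (hm₂ : m₂ ∈ Icc 0 1)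
    (hm₃ : m₃ ∈ Icc 0 ((n : ℤ) - 1)) (h : normalForm n l₁ l₂ l₃ l = normalForm n m₁ m₂ m₃ m) :
    l = m := by
  have h₁ : l₁ = m₁ := by
    have h₁ := congrArg (parity₁ n) h
    rw [parity₁_normalForm, parity₁_normalForm, ZMod.intCast_eq_intCast_iff'] at h₁
    grind
  have h₂ : l₂ = m₂ := by
    have h₂ := congrArg (parity₂ n) h
    rw [parity₂_normalForm, parity₂_normalForm, ZMod.intCast_eq_intCast_iff'] at h₂
    grind
  have h₃ : l₃ + l * n = m₃ + m * n := by
    have h₃ := congrArg (deg n) h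
    rw [deg_normalForm, deg_normalForm, h₁, h₂] at h₃
    linarith
  have hn : (n : ℤ) ≠ 0 := by grind
  calc l = (l₃ + l * n) / n := by
        rw [Int.add_mul_ediv_right _ _ hn, Int.ediv_eq_zero_of_lt hl₃.1 (by grind), zero_add]
    _ = (m₃ + m * n) / n := by rw [h₃]
    _ = m := by
        rw [Int.add_mul_ediv_right _ _ hn, Int.ediv_eq_zero_of_lt hm₃.1 (by grind), zero_add]

theorem nonneg_iff_of_eq_normalForm {x : L n} {l₁ l₂ l₃ l : ℤ} (hl₁ : l₁ ∈ Icc 0 1)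
    (hl₂ : l₂ ∈ Icc 0 1) (hl₃ : l₃ ∈ Icc 0 ((n : ℤ) - 1)) (hx : x = normalForm n l₁ l₂ l₃ l) :
    Nonneg n x ↔ 0 ≤ l := by
  constructor
  · rintro ⟨m₁, m₂, m₃, m, hm₁, hm₁', hm₂, hm₂', hm₃, hm₃', hm, hxm⟩
    rwa [eq_of_normalForm_eq hl₁ hl₂ hl₃ ⟨hm₁, hm₁'⟩ ⟨hm₂, hm₂'⟩ ⟨hm₃, hm₃'⟩ (hx.symm.trans hxm)]
  · exact fun hl => ⟨l₁, l₂, l₃, l, hl₁.1, hl₁.2, hl₂.1, hl₂.2, hl₃.1, hl₃.2, hl, hx⟩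

theorem two_mul_apply_eq_mul_deg {δ : L n →+ ℤ} (hδ₁ : δ (x1 n) = (Nat.lcm 2 n : ℤ) / 2)
    (hδ₂ : δ (x2 n) = (Nat.lcm 2 n : ℤ) / 2) (hδ₃ : δ (x3 n) = (Nat.lcm 2 n : ℤ) / n) (x : L n) :
    2 * δ x = (Nat.lcm 2 n : ℤ) / n * deg n x := by
  have h₂ : 2 * ((Nat.lcm 2 n : ℤ) / 2) = (Nat.lcm 2 n : ℤ) / n * n := by
    rw [Int.mul_ediv_cancel' (by exact_mod_cast Nat.dvd_lcm_left 2 n),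
      Int.ediv_mul_cancel (by exact_mod_cast Nat.dvd_lcm_right 2 n)]
  have h : (2 : ℤ) • δ = ((Nat.lcm 2 n : ℤ) / n) • deg n :=
    hom_ext (by simp [hδ₁, deg, h₂]) (by simp [hδ₂, deg, h₂]) (by simp [hδ₃, deg, mul_comm])
  simpa using DFunLike.congr_fun h x

theorem apply_nonneg_iff_deg_nonneg (hn : 0 < n) {δ : L n →+ ℤ}
    (hδ₁ : δ (x1 n) = (Nat.lcm 2 n : ℤ) / 2) (hδ₂ : δ (x2 n) = (Nat.lcm 2 n : ℤ) / 2)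
    (hδ₃ : δ (x3 n) = (Nat.lcm 2 n : ℤ) / n) (x : L n) :
    0 ≤ δ x ↔ 0 ≤ deg n x := by
  have hpos : 0 < (Nat.lcm 2 n : ℤ) / n := by
    refine Int.ediv_pos_of_pos_of_dvd ?_ (by positivity) (by exact_mod_cast Nat.dvd_lcm_right 2 n)
    exact_mod_cast Nat.lcm_pos two_pos hn
  rw [← mul_nonneg_iff_of_pos_left two_pos, two_mul_apply_eq_mul_deg hδ₁ hδ₂ hδ₃,
    mul_nonneg_iff_of_pos_left hpos]

end L

open L

/-- if `-c ≤ x ≤ c` and `δ(x) ≥ 0` then (i) `0 ≤ x ≤ c`, or (ii) `x = x₁ - x₂`,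
or (iii) `x = xᵢ - k·x₃` for some `i ∈ {1,2}` and `0 < k ≤ n/2`. -/
theorem three_choices (n : ℕ) (hn : 2 ≤ n) (δ : L n →+ ℤ)
    (hδ1 : δ (x1 n) = (Nat.lcm 2 n : ℤ) / 2) (hδ2 : δ (x2 n) = (Nat.lcm 2 n : ℤ) / 2)
    (hδ3 : δ (x3 n) = (Nat.lcm 2 n : ℤ) / n)
    (x : L n) (hxl : leL n (-(cc n)) x) (hxu : leL n x (cc n)) (hx : 0 ≤ δ x) :
    (Nonneg n x ∧ leL n x (cc n)) ∨
    x = x1 n - x2 n ∨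
    (∃ k : ℤ, 0 < k ∧ 2 * k ≤ (n : ℤ) ∧
      (x = x1 n - k • x3 n ∨ x = x2 n - k • x3 n)) := by
  obtain ⟨a₁, a₂, a₃, a, ha₁, ha₁', ha₂, ha₂', ha₃, ha₃', ha, hxa⟩ := hxl
  have hx_nf : x = normalForm n a₁ a₂ a₃ (a - 1) := by
    rw [normalForm]
    linear_combination (norm := module) hxa
  rcases le_or_gt 1 a with ha_pos | ha_lt
  · refine Or.inl ⟨?_, hxu⟩
    exact (nonneg_iff_of_eq_normalForm ⟨ha₁, ha₁'⟩ ⟨ha₂, ha₂'⟩ ⟨ha₃, ha₃'⟩ hx_nf).2 (by omega)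
  obtain rfl : a = 0 := by omega
  have hdeg : 2 * n ≤ (a₁ + a₂) * n + 2 * a₃ := by
    have := (apply_nonneg_iff_deg_nonneg (by omega) hδ1 hδ2 hδ3 x).1 hx
    rw [hx_nf, deg_normalForm] at this
    linarith
  rcases (by omega : a₁ = 0 ∨ a₁ = 1) with rfl | rfl <;>
    rcases (by omega : a₂ = 0 ∨ a₂ = 1) with rfl | rfl
  · linarith
  · refine Or.inr (Or.inr ⟨n - a₃, by omega, by linarith, Or.inr ?_⟩)
    rw [hx_nf, normalForm, cc_eq_natCast_smul_x3]
    module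
  · refine Or.inr (Or.inr ⟨n - a₃, by omega, by linarith, Or.inl ?_⟩)
    rw [hx_nf, normalForm, cc_eq_natCast_smul_x3]
    module
  · have ha₃0 : a₃ = 0 := by
      by_contra h
      have hcx : cc n - x = normalForm n 1 1 (n - a₃) (-1) := by
        have hc₁ : cc n = (2 : ℤ) • x1 n := rfl
        rw [hx_nf, normalForm, normalForm]
        linear_combination (norm := module) hc₁ + cc_eq_two_smul_x2 + cc_eq_natCast_smul_x3
      have hneg := nonneg_iff_of_eq_normalForm (by norm_num) (by norm_num) ⟨by omega, by omega⟩ hcx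
      exact absurd (hneg.1 hxu) (by norm_num)
    subst ha₃0
    refine Or.inr (Or.inl ?_)
    rw [hx_nf, normalForm, cc_eq_two_smul_x2]
    module
end

section
/- In the group L = ⟨x₁,x₂,x₃ | 2x₁=2x₂=n x₃ = c⟩ with n ≥ 2, the interval {x ∈ L : 0 ≤ x ≤ c} has exactly n + 3 elements, namely 0, x₁, x₂, x₃, 2x₃, …, (n−1)x₃, and c. -/
/-!
An element of `L` is determined by its degree (`x₁, x₂ ↦ n`, `x₃ ↦ 2`, so `c ↦ 2n`) together with
the parities of its `x₁`- and `x₂`-coordinates: this is an injective homomorphism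
`L → ℤ × ZMod 2 × ZMod 2`. If `x = l₁x₁ + l₂x₂ + l₃x₃ + l·c` and `c - x = m₁x₁ + m₂x₂ + m₃x₃ + m·c`
are normal forms with `l, m ≥ 0`, comparing parities gives `l₁ = m₁`, `l₂ = m₂`, and comparing
degrees gives `n(l₁ + l₂ + l + m) + l₃ + m₃ = n`. As `l₃, m₃ ≤ n - 1`, either exactly one of
`l₁, l₂, l, m` is `1` and `l₃ = 0`, or all of them vanish and `x = l₃x₃` with `1 ≤ l₃ ≤ n - 1`.
-/

open QuotientAddGroup

section

variable {n : ℕ}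

def degParityOfCoords (n : ℕ) : ℤ × ℤ × ℤ →+ ℤ × ZMod 2 × ZMod 2 where
  toFun p := (n * (p.1 + p.2.1) + 2 * p.2.2, p.1, p.2.1)
  map_zero' := by simp
  map_add' p q := by ext <;> simp; ring

lemma rel_le_ker_degParityOfCoords : rel n ≤ (degParityOfCoords n).ker := by
  rw [rel, AddSubgroup.closure_le]
  rintro _ (rfl | rfl) <;> ext <;> simp [degParityOfCoords] <;> ring_nf <;> decide

def degParity (n : ℕ) : L n →+ ℤ × ZMod 2 × ZMod 2 :=
  lift (rel n) (degParityOfCoords n) rel_le_ker_degParityOfCoords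

lemma degParity_injective : Function.Injective (degParity n) := by
  refine (injective_iff_map_eq_zero _).mpr fun x hx => ?_
  obtain ⟨⟨a, b, c⟩, rfl⟩ := mk_surjective x
  simp only [degParity, lift_mk, degParityOfCoords, AddMonoidHom.coe_mk, ZeroHom.coe_mk,
    Prod.mk_eq_zero, ZMod.intCast_zmod_eq_zero_iff_dvd] at hx
  obtain ⟨hdeg, ⟨a, rfl⟩, ⟨b, rfl⟩⟩ := hx
  have hc : c = -n * (a + b) := by push_cast at hdeg; linarith
  rw [eq_zero_iff, hc, rel, AddSubgroup.mem_closure_pair]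
  exact ⟨-b, a + b, by ext <;> simp <;> ring⟩

@[simp] lemma degParity_x1 : degParity n (x1 n) = ((n : ℤ), 1, 0) := by
  simp [degParity, x1, degParityOfCoords]
@[simp] lemma degParity_x2 : degParity n (x2 n) = ((n : ℤ), 0, 1) := by
  simp [degParity, x2, degParityOfCoords]
@[simp] lemma degParity_x3 : degParity n (x3 n) = (2, 0, 0) := by
  simp [degParity, x3, degParityOfCoords]
@[simp] lemma degParity_zsmul_x3 (k : ℤ) : degParity n (k • x3 n) = (2 * k, 0, 0) := by
  simp [mul_comm]
@[simp] lemma degParity_cc : degParity n (cc n) = (2 * (n : ℤ), 0, 0) := by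
  simp only [cc, map_zsmul, degParity_x1, Prod.smul_mk, zsmul_eq_mul]
  ext <;> simp
  decide

lemma two_zsmul_x2 : (2 : ℤ) • x2 n = cc n :=
  degParity_injective (by simp; decide)

lemma natCast_zsmul_x3 : (n : ℤ) • x3 n = cc n :=
  degParity_injective (by simp [mul_comm])

def intervalElems (n : ℕ) : Set (L n) :=
  {0, x1 n, x2 n, cc n} ∪ (fun k : ℤ => k • x3 n) '' Set.Icc 1 ((n : ℤ) - 1)

lemma degParity_normalForm (l1 l2 l3 l : ℤ) :
    degParity n (l1 • x1 n + l2 • x2 n + l3 • x3 n + l • cc n) =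
      (n * (l1 + l2 + 2 * l) + 2 * l3, (l1 : ZMod 2), (l2 : ZMod 2)) := by
  ext <;> simp; ring

lemma zsmul_x3_injective : Function.Injective (fun k : ℤ => k • x3 n) := fun i j hij => by
  simpa using congrArg (degParity n) hij

lemma eq_of_intCast_add_intCast_eq_zero {a b : ℤ} (ha : 0 ≤ a) (ha' : a ≤ 1) (hb : 0 ≤ b)
    (hb' : b ≤ 1) (h : (a : ZMod 2) + b = 0) : a = b := by
  rw [← Int.cast_add, ZMod.intCast_zmod_eq_zero_iff_dvd] at h
  omega

lemma eq_zero_or_eq_one_of_mul_add_eq_self {m s t : ℤ} (hm : 0 < m) (hs : 0 ≤ s) (ht : 0 ≤ t)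
    (h : m * s + t = m) : s = 0 ∧ t = m ∨ s = 1 ∧ t = 0 := by
  have : s ≤ 1 := by nlinarith
  interval_cases s <;> omega

lemma nonneg_zsmul_x3 {k : ℤ} (h0 : 0 ≤ k) (h1 : k ≤ n - 1) : Nonneg n (k • x3 n) :=
  ⟨0, 0, k, 0, le_rfl, zero_le_one, le_rfl, zero_le_one, h0, h1, le_rfl, by simp⟩

lemma nonneg_zero (hn : 0 < n) : Nonneg n 0 := by
  simpa using nonneg_zsmul_x3 (n := n) le_rfl (by omega)

lemma nonneg_x1 (hn : 0 < n) : Nonneg n (x1 n) :=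
  ⟨1, 0, 0, 0, zero_le_one, le_rfl, le_rfl, zero_le_one, le_rfl, by omega, le_rfl, by simp⟩

lemma nonneg_x2 (hn : 0 < n) : Nonneg n (x2 n) :=
  ⟨0, 1, 0, 0, le_rfl, zero_le_one, zero_le_one, le_rfl, le_rfl, by omega, le_rfl, by simp⟩

lemma nonneg_cc (hn : 0 < n) : Nonneg n (cc n) :=
  ⟨0, 0, 0, 1, le_rfl, zero_le_one, le_rfl, zero_le_one, le_rfl, by omega, zero_le_one, by simp⟩

lemma mem_intervalElems_of_le {x : L n} (h0 : leL n 0 x) (hc : leL n x (cc n)) :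
    x ∈ intervalElems n := by
  obtain ⟨l1, l2, l3, l, hl1, hl1', hl2, hl2', hl3, hl3', hl, hx⟩ := h0
  obtain ⟨m1, m2, m3, m, hm1, hm1', hm2, hm2', hm3, hm3', hm, hy⟩ := hc
  rw [sub_zero] at hx
  have hsum := congrArg (degParity n) (add_sub_cancel x (cc n))
  rw [map_add, hy, hx] at hsum
  simp only [degParity_normalForm, degParity_cc, Prod.mk_add_mk, Prod.mk.injEq] at hsum
  obtain ⟨hdeg, hpar1, hpar2⟩ := hsum
  obtain rfl := eq_of_intCast_add_intCast_eq_zero hl1 hl1' hm1 hm1' hpar1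
  obtain rfl := eq_of_intCast_add_intCast_eq_zero hl2 hl2' hm2 hm2' hpar2
  have hdeg' : n * (l1 + l2 + l + m) + (l3 + m3) = n := by linarith
  rcases eq_zero_or_eq_one_of_mul_add_eq_self (by omega) (by omega) (by omega) hdeg' with
    ⟨hs, ht⟩ | ⟨hs, ht⟩
  · obtain ⟨rfl, rfl, rfl⟩ : l1 = 0 ∧ l2 = 0 ∧ l = 0 := by omega
    exact Or.inr ⟨l3, ⟨by omega, by omega⟩, by simp [hx]⟩
  · obtain ⟨rfl, rfl⟩ : l3 = 0 ∧ m3 = 0 := by omega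
    left
    obtain ⟨rfl, rfl, rfl⟩ | ⟨rfl, rfl, rfl⟩ | ⟨rfl, rfl, rfl⟩ | ⟨rfl, rfl, rfl⟩ :
        (l1 = 0 ∧ l2 = 0 ∧ l = 0) ∨ (l1 = 1 ∧ l2 = 0 ∧ l = 0) ∨ (l1 = 0 ∧ l2 = 1 ∧ l = 0) ∨
          (l1 = 0 ∧ l2 = 0 ∧ l = 1) := by omega
    all_goals simp [hx]

lemma le_of_mem_intervalElems (hn : 0 < n) {x : L n} (hx : x ∈ intervalElems n) :
    leL n 0 x ∧ leL n x (cc n) := by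
  simp only [leL, sub_zero]
  rcases hx with (rfl | rfl | rfl | rfl) | ⟨k, ⟨hk1, hk2⟩, rfl⟩
  · simpa using ⟨nonneg_zero hn, nonneg_cc hn⟩
  · refine ⟨nonneg_x1 hn, ?_⟩
    simpa [cc, two_zsmul] using nonneg_x1 hn
  · refine ⟨nonneg_x2 hn, ?_⟩
    simpa [← two_zsmul_x2, two_zsmul] using nonneg_x2 hn
  · simpa using ⟨nonneg_cc hn, nonneg_zero hn⟩
  · refine ⟨nonneg_zsmul_x3 (by omega) hk2, ?_⟩
    dsimp only
    rw [← natCast_zsmul_x3, ← sub_smul]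
    exact nonneg_zsmul_x3 (by omega) (by omega)

lemma ncard_zero_x1_x2_cc (hn : 0 < n) : ({0, x1 n, x2 n, cc n} : Set (L n)).ncard = 4 := by
  have h01 : (0 : L n) ≠ x1 n := ne_of_apply_ne (degParity n) (by simp [Prod.ext_iff])
  have h02 : (0 : L n) ≠ x2 n := ne_of_apply_ne (degParity n) (by simp [Prod.ext_iff])
  have h0c : (0 : L n) ≠ cc n := ne_of_apply_ne (degParity n) (by simp [Prod.ext_iff]; omega)
  have h12 : x1 n ≠ x2 n := ne_of_apply_ne (degParity n) (by simp)
  have h1c : x1 n ≠ cc n := ne_of_apply_ne (degParity n) (by simp)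
  have h2c : x2 n ≠ cc n := ne_of_apply_ne (degParity n) (by simp)
  rw [Set.ncard_insert_of_notMem (by simp [h01, h02, h0c]),
    Set.ncard_insert_of_notMem (by simp [h12, h1c]), Set.ncard_pair h2c]

lemma disjoint_zero_x1_x2_cc_zsmul_x3 :
    Disjoint ({0, x1 n, x2 n, cc n} : Set (L n))
      ((fun k : ℤ => k • x3 n) '' Set.Icc 1 ((n : ℤ) - 1)) := by
  rw [Set.disjoint_right]
  rintro _ ⟨k, ⟨hk1, hk2⟩, rfl⟩ hk
  rcases hk with h | h | h | h <;>
    have := congrArg (degParity n) h <;> simp [Prod.ext_iff] at this <;> omega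

lemma ncard_intervalElems (hn : 0 < n) : (intervalElems n).ncard = n + 3 := by
  rw [intervalElems, Set.ncard_union_eq disjoint_zero_x1_x2_cc_zsmul_x3, ncard_zero_x1_x2_cc hn,
    Set.ncard_image_of_injective _ zsmul_x3_injective, ← Finset.coe_Icc, Set.ncard_coe_finset,
    Int.card_Icc]
  omega

end

/-- the interval `{x ∈ L : 0 ≤ x ≤ c}` consists exactly of
`0, x₁, x₂, x₃, 2x₃, …, (n-1)x₃, c` and has exactly `n + 3` elements. -/
theorem interval_card (n : ℕ) (hn : 2 ≤ n) :
    {x : L n | leL n 0 x ∧ leL n x (cc n)} =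
      ({0, x1 n, x2 n, cc n} ∪ (fun k : ℤ => k • x3 n) '' Set.Icc 1 ((n : ℤ) - 1)) ∧
    {x : L n | leL n 0 x ∧ leL n x (cc n)}.ncard = n + 3 := by
  have hinterval : {x : L n | leL n 0 x ∧ leL n x (cc n)} = intervalElems n :=
    Set.ext fun _ => ⟨fun h => mem_intervalElems_of_le h.1 h.2, le_of_mem_intervalElems (by omega)⟩
  exact ⟨hinterval, hinterval ▸ ncard_intervalElems (by omega)⟩
end

section
/- Let S = k[X₁,X₂,X₃]/(X₃ⁿ − X₂² + X₁²) be L-graded by deg xᵢ = xᵢ, where L = ⟨x₁,x₂,x₃ | 2x₁=2x₂=n x₃⟩ and k is a field. Then for v ∈ L, the homogeneous component S_v is nonzero if and only if v ≥ 0 (i.e., the coefficient of c in the normal form of v is nonnegative). -/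
open MvPolynomial in
/-- The defining relation `X₃ⁿ - X₂² + X₁²` (variables indexed 0,1,2 ↦ X₁,X₂,X₃). -/
noncomputable def relPoly (K : Type) [Field K] (n : ℕ) : MvPolynomial (Fin 3) K :=
  X (2 : Fin 3) ^ n - X (1 : Fin 3) ^ 2 + X (0 : Fin 3) ^ 2

/-- The L-graded coordinate algebra `S = k[X₁,X₂,X₃]/(X₃ⁿ - X₂² + X₁²)`. -/
abbrev Sring (K : Type) [Field K] (n : ℕ) :=
  MvPolynomial (Fin 3) K ⧸ Ideal.span {relPoly K n}

/-- The degree in L of a monomial exponent vector (deg Xᵢ = xᵢ). -/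
def degMon (n : ℕ) (m : Fin 3 →₀ ℕ) : L n :=
  (m 0 : ℤ) • x1 n + (m 1 : ℤ) • x2 n + (m 2 : ℤ) • x3 n

/-- The degree-v homogeneous component of S: the k-span of (images of) monomials of degree v. -/
noncomputable def comp (K : Type) [Field K] (n : ℕ) (v : L n) : Submodule K (Sring K n) :=
  Submodule.span K {q : Sring K n | ∃ m : Fin 3 →₀ ℕ, degMon n m = v ∧
    q = Ideal.Quotient.mk (Ideal.span {relPoly K n}) (MvPolynomial.monomial m 1)}

/- ---------------- auxiliary lemmas ---------------- -/

lemma two_smul_x2 (n : ℕ) : (2 : ℤ) • x2 n = cc n := by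
  rw [cc, x1, x2, ← map_zsmul, ← map_zsmul]
  refine (QuotientAddGroup.mk'_eq_mk' _).mpr ⟨(2, -2, 0), AddSubgroup.subset_closure (by simp), ?_⟩
  simp [Prod.ext_iff]

lemma n_smul_x3 (n : ℕ) : (n : ℤ) • x3 n = cc n := by
  rw [cc, x1, x3, ← map_zsmul, ← map_zsmul]
  refine (QuotientAddGroup.mk'_eq_mk' _).mpr
    ⟨(2, 0, -(n : ℤ)), AddSubgroup.subset_closure (by simp), ?_⟩
  simp [Prod.ext_iff]

lemma nonneg_of_coords (n : ℕ) (hn : 1 ≤ n) (a b c : ℤ) (ha : 0 ≤ a) (hb : 0 ≤ b)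
    (hc : 0 ≤ c) : Nonneg n (a • x1 n + b • x2 n + c • x3 n) := by
  have hn0 : (0 : ℤ) < (n : ℤ) := by exact_mod_cast hn
  refine ⟨a % 2, b % 2, c % n, a / 2 + b / 2 + c / n, by omega, by omega, by omega, by omega,
    Int.emod_nonneg c hn0.ne', by have := Int.emod_lt_of_pos c hn0; omega,
    by positivity, ?_⟩
  have hx1 : (a / 2) • cc n = (2 * (a / 2)) • x1 n := by rw [cc, ← mul_zsmul']
  have hx2 : (b / 2) • cc n = (2 * (b / 2)) • x2 n := by rw [← two_smul_x2, ← mul_zsmul']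
  have hx3 : (c / n) • cc n = ((n : ℤ) * (c / n)) • x3 n := by rw [← n_smul_x3, ← mul_zsmul']
  have ea : a = a % 2 + 2 * (a / 2) := by omega
  have eb : b = b % 2 + 2 * (b / 2) := by omega
  have ec : c = c % n + (n : ℤ) * (c / n) := by rw [Int.emod_add_mul_ediv c n]
  rw [add_zsmul, add_zsmul, hx1, hx2, hx3]
  conv_lhs => rw [ea, eb, ec]
  rw [add_zsmul, add_zsmul, add_zsmul]
  abel

open MvPolynomial in
lemma aux_ne_zero (K : Type) [Field K] (n : ℕ) (hn : 2 ≤ n) :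
    (X 1 ^ n - X 0 ^ 2 : MvPolynomial (Fin 2) K) ≠ 0 := by
  intro h
  have h' := sub_eq_zero.mp h
  have hco := congrArg (coeff (Finsupp.single 1 n)) h'
  rw [coeff_X_pow, coeff_X_pow, if_pos rfl] at hco
  by_cases hif : Finsupp.single (0 : Fin 2) 2 = Finsupp.single (1 : Fin 2) n
  · have h2 := congrArg (fun f => f (1 : Fin 2)) hif
    simp [Finsupp.single_apply] at h2
    omega
  · rw [if_neg hif] at hco
    exact one_ne_zero hco

open MvPolynomial Polynomial in
lemma not_dvd_monomial (K : Type) [Field K] (n : ℕ) (hn : 2 ≤ n) (m : Fin 3 →₀ ℕ) :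
    ¬ relPoly K n ∣ (MvPolynomial.monomial m 1 : MvPolynomial (Fin 3) K) := by
  rintro ⟨q, hq⟩
  -- pass to polynomials in X₀ over K[X₀',X₁'] (the remaining two variables)
  have hmono : (MvPolynomial.monomial m 1 : MvPolynomial (Fin 3) K) =
      X 0 ^ m 0 * X 1 ^ m 1 * X 2 ^ m 2 := by
    have : m = Finsupp.single 0 (m 0) + Finsupp.single 1 (m 1) + Finsupp.single 2 (m 2) := by
      ext i; fin_cases i <;> simp [Finsupp.single_apply]
    rw [this]
    simp [MvPolynomial.X_pow_eq_monomial, MvPolynomial.monomial_mul]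
  have h1 : (1 : Fin 3) = (0 : Fin 2).succ := rfl
  have h2 : (2 : Fin 3) = (1 : Fin 2).succ := rfl
  set a : MvPolynomial (Fin 2) K := X 1 ^ n - X 0 ^ 2 with ha
  have hP : (MvPolynomial.finSuccEquiv K 2) (relPoly K n) =
      Polynomial.X ^ 2 + Polynomial.C a := by
    rw [relPoly, h1, h2]
    simp only [map_add, map_sub, map_pow, MvPolynomial.finSuccEquiv_X_zero,
      MvPolynomial.finSuccEquiv_X_succ]
    rw [ha, map_sub, Polynomial.C_pow, Polynomial.C_pow]
    ring
  have hca : (X 0 ^ m 1 * X 1 ^ m 2 : MvPolynomial (Fin 2) K) ≠ 0 := by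
    apply mul_ne_zero <;> exact pow_ne_zero _ (X_ne_zero _)
  have hM : (MvPolynomial.finSuccEquiv K 2) (MvPolynomial.monomial m 1 :
      MvPolynomial (Fin 3) K) = Polynomial.monomial (m 0) (X 0 ^ m 1 * X 1 ^ m 2) := by
    rw [hmono, h1, h2]
    simp only [map_mul, map_pow, MvPolynomial.finSuccEquiv_X_zero,
      MvPolynomial.finSuccEquiv_X_succ]
    rw [← Polynomial.C_pow, ← Polynomial.C_pow, ← Polynomial.C_mul_X_pow_eq_monomial, map_mul]
    ring
  set φ := MvPolynomial.finSuccEquiv K 2 with hφ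
  have key : Polynomial.monomial (m 0) (X 0 ^ m 1 * X 1 ^ m 2) =
      φ q * (Polynomial.X ^ 2 + Polynomial.C a) := by
    rw [← hM, ← hP, hq, map_mul, mul_comm]
  have haz : a ≠ 0 := aux_ne_zero K n hn
  have hPne : (Polynomial.X ^ 2 + Polynomial.C a :
      Polynomial (MvPolynomial (Fin 2) K)) ≠ 0 := X_pow_add_C_ne_zero (by norm_num) a
  have hQne : φ q ≠ 0 := by
    intro h0
    rw [h0, zero_mul] at key
    exact hca (Polynomial.monomial_eq_zero_iff _ _ |>.mp key)
  have hdeg : m 0 = (φ q).natDegree + 2 := by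
    have := congrArg Polynomial.natDegree key
    rwa [Polynomial.natDegree_monomial_eq _ hca, Polynomial.natDegree_mul hQne hPne,
      Polynomial.natDegree_X_pow_add_C] at this
  have htr : m 0 = (φ q).natTrailingDegree := by
    have := congrArg Polynomial.natTrailingDegree key
    rw [Polynomial.natTrailingDegree_monomial hca,
      Polynomial.natTrailingDegree_mul hQne hPne] at this
    have h0 : (Polynomial.X ^ 2 + Polynomial.C a :
        Polynomial (MvPolynomial (Fin 2) K)).natTrailingDegree = 0 := by
      rw [Polynomial.natTrailingDegree_eq_zero]
      right
      simpa [Polynomial.coeff_X_pow] using haz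
    omega
  have := Polynomial.natTrailingDegree_le_natDegree (φ q)
  omega

open MvPolynomial in
lemma monomial_image_ne_zero (K : Type) [Field K] (n : ℕ) (hn : 2 ≤ n) (m : Fin 3 →₀ ℕ) :
    Ideal.Quotient.mk (Ideal.span {relPoly K n}) (MvPolynomial.monomial m 1) ≠ 0 := by
  rw [Ne, Ideal.Quotient.eq_zero_iff_mem, Ideal.mem_span_singleton]
  exact not_dvd_monomial K n hn m

/-- the homogeneous component `S_v` is nonzero iff `v ≥ 0` in L. -/
theorem component_nonzero_iff (K : Type) [Field K] (n : ℕ) (hn : 2 ≤ n) (v : L n) :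
    comp K n v ≠ ⊥ ↔ Nonneg n v := by
  constructor
  · intro hne
    have hset : ∃ m : Fin 3 →₀ ℕ, degMon n m = v := by
      by_contra h
      push_neg at h
      apply hne
      rw [comp]
      convert Submodule.span_empty
      rw [Set.eq_empty_iff_forall_notMem]
      rintro q ⟨m, hm, -⟩
      exact h m hm
    obtain ⟨m, hm⟩ := hset
    rw [← hm, degMon]
    exact nonneg_of_coords n (by omega) _ _ _ (Int.ofNat_nonneg _) (Int.ofNat_nonneg _)
      (Int.ofNat_nonneg _)
  · rintro ⟨l1, l2, l3, l, h1, h1', h2, h2', h3, h3', hl, hv⟩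
    set m : Fin 3 →₀ ℕ := Finsupp.single 0 (l1 + 2 * l).toNat + Finsupp.single 1 l2.toNat +
      Finsupp.single 2 l3.toNat with hmdef
    have hm0 : m 0 = (l1 + 2 * l).toNat := by simp [hmdef, Finsupp.single_apply]
    have hm1 : m 1 = l2.toNat := by simp [hmdef, Finsupp.single_apply]
    have hm2 : m 2 = l3.toNat := by simp [hmdef, Finsupp.single_apply]
    have hdm : degMon n m = v := by
      rw [degMon, hm0, hm1, hm2, Int.toNat_of_nonneg (by omega), Int.toNat_of_nonneg h2,
        Int.toNat_of_nonneg h3, hv]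
      have : l • cc n = (2 * l) • x1 n := by rw [cc, ← mul_zsmul']
      rw [this, add_zsmul]
      abel
    rw [Submodule.ne_bot_iff]
    exact ⟨Ideal.Quotient.mk (Ideal.span {relPoly K n}) (MvPolynomial.monomial m 1),
      Submodule.subset_span ⟨m, hdm, rfl⟩, monomial_image_ne_zero K n hn m⟩
end

section
/- Let L = ⟨x₁,x₂,x₃ | 2x₁=2x₂=n x₃ = c⟩ with n ≥ 2, and fix integers 1 ≤ a ≤ b ≤ n/2 and i ∈ {1,2}. Suppose I ⊆ L is a set such that each x ∈ I satisfies one of: (i) 0 ≤ x ≤ (n−b)x₃; (ii) x = x₁ − x₂; (iii) x = xᵢ − k x₃ with a ≤ k ≤ b. Then |I| ≤ n + 3 − a < n + 3. -/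
def degHom (n : ℕ) : (ℤ × ℤ × ℤ) →+ ℤ where
  toFun p := n * p.1 + n * p.2.1 + 2 * p.2.2
  map_zero' := by simp
  map_add' p q := by simp [Prod.fst_add, Prod.snd_add]; ring

def deg (n : ℕ) : L n →+ ℤ :=
  QuotientAddGroup.lift (rel n) (degHom n) (by
    intro x hx
    have h : rel n ≤ (degHom n).ker := by
      rw [rel, AddSubgroup.closure_le]
      rintro p hp
      simp only [Set.mem_insert_iff, Set.mem_singleton_iff] at hp
      rcases hp with rfl | rfl <;> simp [degHom, AddMonoidHom.mem_ker] <;> ring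
    exact h hx)

lemma deg_x1 (n : ℕ) : deg n (x1 n) = n := by
  simp [deg, x1, QuotientAddGroup.lift_mk', degHom]

lemma deg_x2 (n : ℕ) : deg n (x2 n) = n := by
  simp [deg, x2, QuotientAddGroup.lift_mk', degHom]

lemma deg_x3 (n : ℕ) : deg n (x3 n) = 2 := by
  simp [deg, x3, QuotientAddGroup.lift_mk', degHom]

lemma deg_cc (n : ℕ) : deg n (cc n) = 2 * n := by
  simp [cc, map_zsmul, deg_x1]

def parHom1 (n : ℕ) : (ℤ × ℤ × ℤ) →+ ZMod 2 where
  toFun p := (p.1 : ZMod 2)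
  map_zero' := by simp
  map_add' p q := by simp [Prod.fst_add]

def par1 (n : ℕ) : L n →+ ZMod 2 :=
  QuotientAddGroup.lift (rel n) (parHom1 n) (by
    intro x hx
    have h : rel n ≤ (parHom1 n).ker := by
      rw [rel, AddSubgroup.closure_le]
      rintro p hp
      simp only [Set.mem_insert_iff, Set.mem_singleton_iff] at hp
      rcases hp with rfl | rfl <;> simp [parHom1, AddMonoidHom.mem_ker] <;> decide
    exact h hx)

def parHom2 (n : ℕ) : (ℤ × ℤ × ℤ) →+ ZMod 2 where
  toFun p := (p.2.1 : ZMod 2)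
  map_zero' := by simp
  map_add' p q := by simp [Prod.snd_add, Prod.fst_add]

def par2 (n : ℕ) : L n →+ ZMod 2 :=
  QuotientAddGroup.lift (rel n) (parHom2 n) (by
    intro x hx
    have h : rel n ≤ (parHom2 n).ker := by
      rw [rel, AddSubgroup.closure_le]
      rintro p hp
      simp only [Set.mem_insert_iff, Set.mem_singleton_iff] at hp
      rcases hp with rfl | rfl <;> simp [parHom2, AddMonoidHom.mem_ker] <;> decide
    exact h hx)

lemma par1_x1 (n : ℕ) : par1 n (x1 n) = 1 := by
  simp [par1, x1, QuotientAddGroup.lift_mk', parHom1]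
lemma par1_x2 (n : ℕ) : par1 n (x2 n) = 0 := by
  simp [par1, x2, QuotientAddGroup.lift_mk', parHom1]
lemma par1_x3 (n : ℕ) : par1 n (x3 n) = 0 := by
  simp [par1, x3, QuotientAddGroup.lift_mk', parHom1]
lemma par1_cc (n : ℕ) : par1 n (cc n) = 0 := by
  rw [cc, map_zsmul, par1_x1, zsmul_eq_mul, mul_one]
  exact (ZMod.intCast_zmod_eq_zero_iff_dvd 2 2).mpr (by norm_num)
lemma par2_x1 (n : ℕ) : par2 n (x1 n) = 0 := by
  simp [par2, x1, QuotientAddGroup.lift_mk', parHom2]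
lemma par2_x2 (n : ℕ) : par2 n (x2 n) = 1 := by
  simp [par2, x2, QuotientAddGroup.lift_mk', parHom2]
lemma par2_x3 (n : ℕ) : par2 n (x3 n) = 0 := by
  simp [par2, x3, QuotientAddGroup.lift_mk', parHom2]
lemma par2_cc (n : ℕ) : par2 n (cc n) = 0 := by
  simp [cc, map_zsmul, par2_x1]

lemma key_interval (n : ℕ) (hn : 2 ≤ n) (b : ℤ) (hb1 : 1 ≤ b) (hb2 : 2 * b ≤ (n : ℤ))
    (x : L n) (h0 : Nonneg n x) (h1 : Nonneg n (((n : ℤ) - b) • x3 n - x)) :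
    ∃ k : ℤ, 0 ≤ k ∧ k ≤ (n : ℤ) - b ∧ x = k • x3 n := by
  obtain ⟨l1, l2, l3, l, hl1, hl1', hl2, hl2', hl3, hl3', hl, hx⟩ := h0
  obtain ⟨m1, m2, m3, m, hm1, hm1', hm2, hm2', hm3, hm3', hm, hy⟩ := h1
  -- degree equations
  have E1 : deg n x = l1 * n + l2 * n + l3 * 2 + l * (2 * n) := by
    rw [hx]
    simp only [map_add, map_zsmul, deg_x1, deg_x2, deg_x3, deg_cc, smul_eq_mul]
    try ring
  have E2 : ((n : ℤ) - b) * 2 - deg n x = m1 * n + m2 * n + m3 * 2 + m * (2 * n) := by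
    have h := congrArg (deg n) hy
    simp only [map_add, map_sub, map_zsmul, deg_x1, deg_x2, deg_x3, deg_cc,
      smul_eq_mul] at h
    linarith [h]
  -- parity equations
  have P1 : ((l1 + m1 : ℤ) : ZMod 2) = 0 := by
    have h1' : par1 n x = (l1 : ZMod 2) := by
      rw [hx]
      simp only [map_add, map_zsmul, par1_x1, par1_x2, par1_x3, par1_cc, smul_zero,
        zsmul_eq_mul, mul_one, mul_zero]
      ring
    have h2' : - par1 n x = (m1 : ZMod 2) := by
      have h := congrArg (par1 n) hy
      simp only [map_add, map_sub, map_zsmul, par1_x1, par1_x2, par1_x3, par1_cc,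
        smul_zero, zsmul_eq_mul, mul_one, mul_zero] at h
      linear_combination h
    push_cast
    rw [← h1', ← h2']; ring
  have P2 : ((l2 + m2 : ℤ) : ZMod 2) = 0 := by
    have h1' : par2 n x = (l2 : ZMod 2) := by
      rw [hx]
      simp only [map_add, map_zsmul, par2_x1, par2_x2, par2_x3, par2_cc, smul_zero,
        zsmul_eq_mul, mul_one, mul_zero]
      ring
    have h2' : - par2 n x = (m2 : ZMod 2) := by
      have h := congrArg (par2 n) hy
      simp only [map_add, map_sub, map_zsmul, par2_x1, par2_x2, par2_x3, par2_cc,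
        smul_zero, zsmul_eq_mul, mul_one, mul_zero] at h
      linear_combination h
    push_cast
    rw [← h1', ← h2']; ring
  have d1 : (2 : ℤ) ∣ l1 + m1 := (ZMod.intCast_zmod_eq_zero_iff_dvd _ 2).mp P1
  have d2 : (2 : ℤ) ∣ l2 + m2 := (ZMod.intCast_zmod_eq_zero_iff_dvd _ 2).mp P2
  obtain ⟨p, hp⟩ := d1
  obtain ⟨q, hq⟩ := d2
  -- combined degree equation
  have eqA : (l1 + l2 + m1 + m2) * (n : ℤ) + (l3 + m3) * 2 + (l + m) * (2 * n)
      = ((n : ℤ) - b) * 2 := by linarith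
  have hp0 : 0 ≤ p := by omega
  have hq0 : 0 ≤ q := by omega
  -- show p + q + l + m = 0
  have hzero : p + q + l + m = 0 := by
    by_contra hne
    have h1' : 1 ≤ p + q + l + m := by omega
    have h2' : (n : ℤ) * 1 ≤ (n : ℤ) * (p + q + l + m) :=
      mul_le_mul_of_nonneg_left h1' (by positivity)
    have h3' : 2 * ((n : ℤ) * (p + q + l + m)) = 2 * ((n : ℤ) - b - (l3 + m3)) := by
      linear_combination eqA - (n : ℤ) * hp - (n : ℤ) * hq
    linarith
  have hl0 : l = 0 := by omega
  have hm0 : m = 0 := by omega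
  have hl10 : l1 = 0 := by omega
  have hl20 : l2 = 0 := by omega
  have hm10 : m1 = 0 := by omega
  have hm20 : m2 = 0 := by omega
  have hm30 : l3 + m3 = (n : ℤ) - b := by
    rw [hl10, hl20, hm10, hm20, hl0, hm0] at eqA
    linarith
  refine ⟨l3, hl3, by omega, ?_⟩
  rw [hx, hl10, hl20, hl0]
  simp

/-- fix `1 ≤ a ≤ b ≤ n/2` and `i ∈ {1,2}`. If each `x ∈ I` satisfies
(i) `0 ≤ x ≤ (n-b)x₃`, or (ii) `x = x₁ - x₂`, or (iii) `x = xᵢ - k x₃` with `a ≤ k ≤ b`,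
then `|I| ≤ n + 3 - a < n + 3`. -/
theorem counting_bound (n : ℕ) (hn : 2 ≤ n) (a b : ℤ) (ha : 1 ≤ a) (hab : a ≤ b)
    (hb : 2 * b ≤ (n : ℤ)) (xi : L n) (hxi : xi = x1 n ∨ xi = x2 n)
    (I : Finset (L n))
    (hall : ∀ x ∈ I,
      (leL n 0 x ∧ leL n x (((n : ℤ) - b) • x3 n)) ∨
      x = x1 n - x2 n ∨
      (∃ k : ℤ, a ≤ k ∧ k ≤ b ∧ x = xi - k • x3 n)) :
    (I.card : ℤ) ≤ (n : ℤ) + 3 - a ∧ (n : ℤ) + 3 - a < (n : ℤ) + 3 := by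
  refine ⟨?_, by linarith⟩
  classical
  have hb1 : 1 ≤ b := le_trans ha hab
  set S1 : Finset (L n) := (Finset.Icc (0 : ℤ) ((n : ℤ) - b)).image (fun k => k • x3 n)
    with hS1
  set S2 : Finset (L n) := {x1 n - x2 n} with hS2
  set S3 : Finset (L n) := (Finset.Icc a b).image (fun k => xi - k • x3 n) with hS3
  have hsub : I ⊆ (S1 ∪ S2) ∪ S3 := by
    intro x hx
    rcases hall x hx with ⟨h0, h1⟩ | h2 | ⟨k, hk1, hk2, rfl⟩
    · have h0' : Nonneg n x := by
        have := h0
        rw [leL, sub_zero] at this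
        exact this
      obtain ⟨k, hk0, hkn, rfl⟩ := key_interval n hn b hb1 hb x h0' h1
      refine Finset.mem_union_left _ (Finset.mem_union_left _ ?_)
      rw [hS1]
      exact Finset.mem_image.mpr ⟨k, Finset.mem_Icc.mpr ⟨hk0, hkn⟩, rfl⟩
    · refine Finset.mem_union_left _ (Finset.mem_union_right _ ?_)
      rw [hS2]
      simp [h2]
    · refine Finset.mem_union_right _ ?_
      rw [hS3]
      exact Finset.mem_image.mpr ⟨k, Finset.mem_Icc.mpr ⟨hk1, hk2⟩, rfl⟩
  have hc : I.card ≤ S1.card + S2.card + S3.card := by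
    calc I.card ≤ ((S1 ∪ S2) ∪ S3).card := Finset.card_le_card hsub
      _ ≤ (S1 ∪ S2).card + S3.card := Finset.card_union_le _ _
      _ ≤ S1.card + S2.card + S3.card := by
          exact Nat.add_le_add_right (Finset.card_union_le _ _) _
  have c1 : (S1.card : ℤ) ≤ (n : ℤ) - b + 1 := by
    have h := Finset.card_image_le (s := Finset.Icc (0 : ℤ) ((n : ℤ) - b))
      (f := fun k => k • x3 n)
    rw [Int.card_Icc] at h
    rw [hS1]
    omega
  have c2 : (S2.card : ℤ) = 1 := by rw [hS2]; simp
  have c3 : (S3.card : ℤ) ≤ b - a + 1 := by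
    have h := Finset.card_image_le (s := Finset.Icc a b) (f := fun k => xi - k • x3 n)
    rw [Int.card_Icc] at h
    rw [hS3]
    omega
  have hc' : (I.card : ℤ) ≤ (S1.card : ℤ) + S2.card + S3.card := by exact_mod_cast hc
  linarith
end

section
/- Let L = ⟨x₁,x₂,x₃ | 2x₁=2x₂=n x₃ = c⟩ with n ≥ 2 and ω = c − x₁ − x₂ − x₃. Then for each 1 ≤ i ≤ n there is no x ∈ L satisfying both x ≥ 0 and x ≤ ω + (i−1)x₃, i.e. these two conditions are incompatible. -/
/-- The degree invariant on ℤ³. -/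
def fdeg (n : ℕ) : ℤ × ℤ × ℤ →+ ℤ where
  toFun p := n * p.1 + n * p.2.1 + 2 * p.2.2
  map_zero' := by simp
  map_add' p q := by simp [Prod.fst_add, Prod.snd_add]; ring

/-- First-coordinate parity invariant. -/
def g1 : ℤ × ℤ × ℤ →+ ZMod 2 :=
  (Int.castAddHom (ZMod 2)).comp (AddMonoidHom.fst ℤ (ℤ × ℤ))

/-- Second-coordinate parity invariant. -/
def g2 : ℤ × ℤ × ℤ →+ ZMod 2 :=
  (Int.castAddHom (ZMod 2)).comp ((AddMonoidHom.fst ℤ ℤ).comp (AddMonoidHom.snd ℤ (ℤ × ℤ)))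

lemma fdeg_ker (n : ℕ) : ∀ p ∈ rel n, fdeg n p = 0 := by
  intro p hp
  have : rel n ≤ (fdeg n).ker := by
    rw [rel, AddSubgroup.closure_le]
    rintro q hq
    simp only [Set.mem_insert_iff, Set.mem_singleton_iff] at hq
    rcases hq with rfl | rfl <;> simp [fdeg, AddMonoidHom.mem_ker] <;> ring
  exact this hp

lemma g1_ker (n : ℕ) : ∀ p ∈ rel n, g1 p = 0 := by
  intro p hp
  have : rel n ≤ g1.ker := by
    rw [rel, AddSubgroup.closure_le]
    rintro q hq
    simp only [Set.mem_insert_iff, Set.mem_singleton_iff] at hq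
    rcases hq with rfl | rfl <;> simp [g1, AddMonoidHom.mem_ker] <;> decide
  exact this hp

lemma g2_ker (n : ℕ) : ∀ p ∈ rel n, g2 p = 0 := by
  intro p hp
  have : rel n ≤ g2.ker := by
    rw [rel, AddSubgroup.closure_le]
    rintro q hq
    simp only [Set.mem_insert_iff, Set.mem_singleton_iff] at hq
    rcases hq with rfl | rfl <;> simp [g2, AddMonoidHom.mem_ker] <;> decide
  exact this hp

/-- Degree homomorphism on L. -/
def phi (n : ℕ) : L n →+ ℤ := QuotientAddGroup.lift (rel n) (fdeg n) (fdeg_ker n)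

/-- First parity homomorphism on L. -/
def psi1 (n : ℕ) : L n →+ ZMod 2 := QuotientAddGroup.lift (rel n) g1 (g1_ker n)

/-- Second parity homomorphism on L. -/
def psi2 (n : ℕ) : L n →+ ZMod 2 := QuotientAddGroup.lift (rel n) g2 (g2_ker n)

lemma phi_x1 (n : ℕ) : phi n (x1 n) = n := by
  simp [phi, x1, fdeg, QuotientAddGroup.lift_mk']
lemma phi_x2 (n : ℕ) : phi n (x2 n) = n := by
  simp [phi, x2, fdeg, QuotientAddGroup.lift_mk']
lemma phi_x3 (n : ℕ) : phi n (x3 n) = 2 := by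
  simp [phi, x3, fdeg, QuotientAddGroup.lift_mk']
lemma phi_cc (n : ℕ) : phi n (cc n) = 2 * n := by
  simp [cc, map_zsmul, phi_x1]
lemma phi_om (n : ℕ) : phi n (om n) = -2 := by
  simp [om, map_sub, phi_cc, phi_x1, phi_x2, phi_x3]; ring

lemma psi1_x1 (n : ℕ) : psi1 n (x1 n) = 1 := by
  simp [psi1, x1, g1, QuotientAddGroup.lift_mk']
lemma psi1_x2 (n : ℕ) : psi1 n (x2 n) = 0 := by
  simp [psi1, x2, g1, QuotientAddGroup.lift_mk']
lemma psi1_x3 (n : ℕ) : psi1 n (x3 n) = 0 := by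
  simp [psi1, x3, g1, QuotientAddGroup.lift_mk']
lemma psi1_cc (n : ℕ) : psi1 n (cc n) = 0 := by
  simp [cc, map_zsmul, psi1_x1]; decide
lemma psi1_om (n : ℕ) : psi1 n (om n) = 1 := by
  simp [om, map_sub, psi1_cc, psi1_x1, psi1_x2, psi1_x3]

lemma psi2_x1 (n : ℕ) : psi2 n (x1 n) = 0 := by
  simp [psi2, x1, g2, QuotientAddGroup.lift_mk']
lemma psi2_x2 (n : ℕ) : psi2 n (x2 n) = 1 := by
  simp [psi2, x2, g2, QuotientAddGroup.lift_mk']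
lemma psi2_x3 (n : ℕ) : psi2 n (x3 n) = 0 := by
  simp [psi2, x3, g2, QuotientAddGroup.lift_mk']
lemma psi2_cc (n : ℕ) : psi2 n (cc n) = 0 := by
  simp [cc, map_zsmul, psi2_x1]
lemma psi2_om (n : ℕ) : psi2 n (om n) = 1 := by
  simp [om, map_sub, psi2_cc, psi2_x1, psi2_x2, psi2_x3]

/-- for `1 ≤ i ≤ n`, no `x ∈ L` satisfies both `x ≥ 0` and
`x ≤ ω + (i-1)x₃` (in particular `x ≥ 0` and `x ≤ ω + c` are incompatible). -/
theorem no_line_bundle_in_missing_part (n : ℕ) (hn : 2 ≤ n) (i : ℕ)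
    (hi1 : 1 ≤ i) (hi2 : i ≤ n) (x : L n) :
    ¬(Nonneg n x ∧ leL n x (om n + ((i : ℤ) - 1) • x3 n)) := by
  rintro ⟨⟨l1, l2, l3, l, hl1a, hl1b, hl2a, hl2b, hl3a, hl3b, hl, hx⟩,
    m1, m2, m3, m, hm1a, hm1b, hm2a, hm2b, hm3a, hm3b, hm, hy⟩
  -- apply the degree homomorphism
  have Hx : phi n x = l1 * n + l2 * n + l3 * 2 + l * (2 * n) := by
    rw [hx]
    simp [map_add, map_zsmul, phi_x1, phi_x2, phi_x3, phi_cc, smul_eq_mul]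
  have Hy : -2 + ((i : ℤ) - 1) * 2 - phi n x
      = m1 * n + m2 * n + m3 * 2 + m * (2 * n) := by
    have := congrArg (phi n) hy
    simpa [map_add, map_sub, map_zsmul, phi_x1, phi_x2, phi_x3, phi_cc, phi_om,
      smul_eq_mul] using this
  -- apply the parity homomorphisms
  have P1x : psi1 n x = (l1 : ZMod 2) := by
    rw [hx]
    simp [map_add, map_zsmul, psi1_x1, psi1_x2, psi1_x3, psi1_cc]
  have P1 : (1 : ZMod 2) - (l1 : ZMod 2) = (m1 : ZMod 2) := by
    have := congrArg (psi1 n) hy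
    simpa [map_add, map_sub, map_zsmul, psi1_x1, psi1_x2, psi1_x3, psi1_cc, psi1_om,
      P1x, smul_eq_mul] using this
  have P2x : psi2 n x = (l2 : ZMod 2) := by
    rw [hx]
    simp [map_add, map_zsmul, psi2_x1, psi2_x2, psi2_x3, psi2_cc]
  have P2 : (1 : ZMod 2) - (l2 : ZMod 2) = (m2 : ZMod 2) := by
    have := congrArg (psi2 n) hy
    simpa [map_add, map_sub, map_zsmul, psi2_x1, psi2_x2, psi2_x3, psi2_cc, psi2_om,
      P2x, smul_eq_mul] using this
  -- from the parities: l1 + m1 = 1 and l2 + m2 = 1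
  have e1 : l1 + m1 = 1 := by
    have hl' : l1 = 0 ∨ l1 = 1 := by omega
    have hm' : m1 = 0 ∨ m1 = 1 := by omega
    rcases hl' with rfl | rfl <;> rcases hm' with rfl | rfl <;> revert P1 <;> decide
  have e2 : l2 + m2 = 1 := by
    have hl' : l2 = 0 ∨ l2 = 1 := by omega
    have hm' : m2 = 0 ∨ m2 = 1 := by omega
    rcases hl' with rfl | rfl <;> rcases hm' with rfl | rfl <;> revert P2 <;> decide
  -- final arithmetic contradiction
  have hnl : 0 ≤ (n : ℤ) * l := by positivity
  have hnm : 0 ≤ (n : ℤ) * m := by positivity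
  have hin : (i : ℤ) ≤ (n : ℤ) := by exact_mod_cast hi2
  rw [Hx] at Hy
  nlinarith [hl3a, hm3a, hnl, hnm, hin, e1, e2]
end

section
/- Let H be a Hom-finite k-linear hereditary abelian category with Serre duality τ, and let E be an object such that for every indecomposable X and every m ≥ 0: Hom(E,X) ≠ 0 ⟹ Hom(E, τ⁻ᵐX) ≠ 0, and Hom(X,E) ≠ 0 ⟹ Hom(τᵐX, E) ≠ 0. Then any object T with Ext¹(T,T) = 0 contains at most one indecomposable direct summand from the τ-orbit {τᵐE : m ∈ ℤ} of E. -/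
/-!
If `τ^b E` and `τ^a E` with `b < a` were both summands of `T`, the hypothesis on `E`
applied with `X = E` and `m = a - b - 1` gives a nonzero map `τ^{a-b-1} E ⟶ E`, hence,
after applying `τ^{b+1}`, a nonzero map `τ^a E ⟶ τ (τ^b E)`. Composed with the split
inclusion and projection it becomes a morphism `T ⟶ τ T`, which vanishes; since the
summands are split, the original map vanishes too, a contradiction.
-/

open CategoryTheory CategoryTheory.Limits

/-- The m-th power (m ∈ ℤ) of an autoequivalence applied to an object. -/
def zpowObj {C : Type*} [Category C] (τ : C ≌ C) : ℤ → C → C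
  | Int.ofNat m, X => (fun Y => τ.functor.obj Y)^[m] X
  | Int.negSucc m, X => (fun Y => τ.inverse.obj Y)^[m + 1] X

/-- `X` is a direct summand of `T`. -/
def IsDirectSummand {C : Type*} [Category C] (X T : C) : Prop :=
  ∃ (s : X ⟶ T) (r : T ⟶ X), s ≫ r = 𝟙 X

namespace IsDirectSummand

variable {C : Type*} [Category C]

lemma of_iso {X X' T : C} (h : IsDirectSummand X T) (e : X ≅ X') : IsDirectSummand X' T := by
  obtain ⟨s, r, hsr⟩ := h
  exact ⟨e.inv ≫ s, r ≫ e.hom, by simp [reassoc_of% hsr]⟩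

lemma map {D : Type*} [Category D] (F : C ⥤ D) {X T : C} (h : IsDirectSummand X T) :
    IsDirectSummand (F.obj X) (F.obj T) := by
  obtain ⟨s, r, hsr⟩ := h
  exact ⟨F.map s, F.map r, by rw [← F.map_comp, hsr, F.map_id]⟩

lemma hom_eq_zero [HasZeroMorphisms C] {X Y T T' : C} (hX : IsDirectSummand X T)
    (hY : IsDirectSummand Y T') (hT : ∀ f : T ⟶ T', f = 0) (g : X ⟶ Y) : g = 0 := by
  obtain ⟨sX, rX, hX⟩ := hX
  obtain ⟨sY, rY, hY⟩ := hY
  calc g = sX ≫ (rX ≫ g ≫ sY) ≫ rY := by simp [reassoc_of% hX, hY]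
    _ = 0 := by rw [hT (rX ≫ g ≫ sY), zero_comp, comp_zero]

end IsDirectSummand

section zpowObj

variable {C : Type*} [Category C] (τ : C ≌ C)

lemma zpowObj_natCast_succ (m : ℕ) (X : C) :
    zpowObj τ ((m + 1 : ℕ) : ℤ) X = τ.functor.obj (zpowObj τ m X) :=
  Function.iterate_succ_apply' _ m X

lemma zpowObj_negSucc_succ (m : ℕ) (X : C) :
    zpowObj τ (Int.negSucc (m + 1)) X = τ.inverse.obj (zpowObj τ (Int.negSucc m) X) :=
  Function.iterate_succ_apply' _ (m + 1) X

def zpowObjSuccIso : (n : ℤ) → (X : C) → zpowObj τ (n + 1) X ≅ τ.functor.obj (zpowObj τ n X)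
  | Int.ofNat m, X => eqToIso (zpowObj_natCast_succ τ m X)
  | Int.negSucc 0, X => τ.counitIso.symm.app X
  | Int.negSucc (m + 1), X =>
      τ.counitIso.symm.app _ ≪≫ eqToIso (congrArg τ.functor.obj (zpowObj_negSucc_succ τ m X).symm)

def zpowObjPredIso (n : ℤ) (X : C) : zpowObj τ (n - 1) X ≅ τ.inverse.obj (zpowObj τ n X) :=
  τ.unitIso.app _ ≪≫ τ.inverse.mapIso
    ((zpowObjSuccIso τ (n - 1) X).symm ≪≫ eqToIso (congrArg (zpowObj τ · X) (sub_add_cancel n 1)))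

end zpowObj

section NonzeroHom

variable {C : Type*} [Category C] [HasZeroMorphisms C]

lemma exists_ne_zero_of_iso {X X' Y Y' : C} (eX : X ≅ X') (eY : Y ≅ Y')
    (h : ∃ f : X ⟶ Y, f ≠ 0) : ∃ f : X' ⟶ Y', f ≠ 0 := by
  obtain ⟨f, hf⟩ := h
  refine ⟨eX.inv ≫ f ≫ eY.hom, fun h0 => hf ?_⟩
  simpa using congrArg (fun g => eX.hom ≫ g ≫ eY.inv) h0

lemma exists_ne_zero_map {D : Type*} [Category D] [HasZeroMorphisms D] (F : C ⥤ D)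
    [F.PreservesZeroMorphisms] [F.Faithful] {X Y : C} (h : ∃ f : X ⟶ Y, f ≠ 0) :
    ∃ f : F.obj X ⟶ F.obj Y, f ≠ 0 := by
  obtain ⟨f, hf⟩ := h
  exact ⟨F.map f, fun h0 => hf (F.zero_of_map_zero f h0)⟩

lemma exists_ne_zero_zpowObj_add (τ : C ≌ C) {X Y : C} {a b : ℤ}
    (h : ∃ f : zpowObj τ a X ⟶ zpowObj τ b Y, f ≠ 0) (k : ℤ) :
    ∃ f : zpowObj τ (a + k) X ⟶ zpowObj τ (b + k) Y, f ≠ 0 := by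
  induction k using Int.induction_on with
  | zero => rwa [add_zero, add_zero]
  | succ i ih =>
      rw [← add_assoc, ← add_assoc]
      exact exists_ne_zero_of_iso (zpowObjSuccIso τ _ X).symm (zpowObjSuccIso τ _ Y).symm
        (exists_ne_zero_map τ.functor ih)
  | pred i ih =>
      rw [← add_sub_assoc, ← add_sub_assoc]
      exact exists_ne_zero_of_iso (zpowObjPredIso τ _ X).symm (zpowObjPredIso τ _ Y).symm
        (exists_ne_zero_map τ.inverse ih)

lemma le_of_isDirectSummand_zpowObj (τ : C ≌ C) {E T : C}
    (hE : ∀ m : ℕ, ∃ f : zpowObj τ m E ⟶ E, f ≠ 0) (hT : ∀ f : T ⟶ τ.functor.obj T, f = 0)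
    {a b : ℤ} (ha : IsDirectSummand (zpowObj τ a E) T) (hb : IsDirectSummand (zpowObj τ b E) T) :
    a ≤ b := by
  by_contra! hba
  obtain ⟨m, hm⟩ : ∃ m : ℕ, (m : ℤ) = a - b - 1 := ⟨(a - b - 1).toNat, by omega⟩
  have hnonzero : ∃ f : zpowObj τ a E ⟶ zpowObj τ (b + 1) E, f ≠ 0 := by
    have := exists_ne_zero_zpowObj_add τ (a := m) (b := 0) (hE m) (b + 1)
    rwa [show (m : ℤ) + (b + 1) = a by omega, zero_add] at this
  obtain ⟨f, hf⟩ := hnonzero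
  exact hf (ha.hom_eq_zero ((hb.map τ.functor).of_iso (zpowObjSuccIso τ b E).symm) hT f)

end NonzeroHom

theorem at_most_one_summand_in_tau_orbit_general {C : Type*} [Category C] [Abelian C]
    (τ : C ≌ C) (E : C) (hE : Indecomposable E)
    (h2 : ∀ (X : C) (m : ℕ), Indecomposable X →
      (∃ f : X ⟶ E, f ≠ 0) → ∃ f : zpowObj τ (m : ℤ) X ⟶ E, f ≠ 0)
    (T : C) (hT : ∀ f : T ⟶ τ.functor.obj T, f = 0)
    (m₁ m₂ : ℤ) (hs1 : IsDirectSummand (zpowObj τ m₁ E) T)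
    (hs2 : IsDirectSummand (zpowObj τ m₂ E) T) :
    m₁ = m₂ := by
  have hid : 𝟙 E ≠ 0 := fun h => hE.1 ((IsZero.iff_id_eq_zero E).mpr h)
  have hτE (m : ℕ) : ∃ f : zpowObj τ m E ⟶ E, f ≠ 0 := h2 E m hE ⟨𝟙 E, hid⟩
  exact le_antisymm (le_of_isDirectSummand_zpowObj τ hτE hT hs1 hs2)
    (le_of_isDirectSummand_zpowObj τ hτE hT hs2 hs1)

/-- let `E` be an indecomposable object of a hereditary abelian category
with Serre duality `Ext¹(X,Y) ≅ D Hom(Y,τX)` such that nonzero Homs to/from `E`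
propagate along the τ-orbit. If `T` is extension-free — via Serre duality,
`Ext¹(T,T) = D Hom(T,τT) = 0`, i.e. every morphism `T ⟶ τT` is zero — then `T` has at
most one indecomposable direct summand in the τ-orbit `{τᵐE : m ∈ ℤ}` of `E`: if
`τ^{m₁}E` and `τ^{m₂}E` are both direct summands of `T` then `m₁ = m₂`. -/
theorem at_most_one_summand_in_tau_orbit {C : Type*} [Category C] [Abelian C]
    (τ : C ≌ C) (E : C) (hE : Indecomposable E)
    (h1 : ∀ (X : C) (m : ℕ), Indecomposable X →
      (∃ f : E ⟶ X, f ≠ 0) → ∃ f : E ⟶ zpowObj τ (-(m : ℤ)) X, f ≠ 0)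
    (h2 : ∀ (X : C) (m : ℕ), Indecomposable X →
      (∃ f : X ⟶ E, f ≠ 0) → ∃ f : zpowObj τ (m : ℤ) X ⟶ E, f ≠ 0)
    (T : C) (hT : ∀ f : T ⟶ τ.functor.obj T, f = 0)
    (m₁ m₂ : ℤ) (hs1 : IsDirectSummand (zpowObj τ m₁ E) T)
    (hs2 : IsDirectSummand (zpowObj τ m₂ E) T) :
    m₁ = m₂ :=
  at_most_one_summand_in_tau_orbit_general τ E hE h2 T hT m₁ m₂ hs1 hs2
end

section
/- Let L = ⟨x₁,x₂,x₃ | 2x₁=2x₂=n x₃ = c⟩ with n ≥ 2 and δ : L → ℤ the degree homomorphism (δ(x₁)=δ(x₂)=lcm(2,n)/2, δ(x₃)=lcm(2,n)/n). Then for all x ∈ L: x ≥ 0 implies δ(x) ≥ 0, and x ≥ 0 together with δ(x) = 0 implies x = 0. -/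
/-- for the degree homomorphism δ, `x ≥ 0` implies `δ(x) ≥ 0`, and
`x ≥ 0` together with `δ(x) = 0` implies `x = 0`. -/
theorem degree_nonneg_and_zero (n : ℕ) (hn : 2 ≤ n) (δ : L n →+ ℤ)
    (hδ1 : δ (x1 n) = (Nat.lcm 2 n : ℤ) / 2) (hδ2 : δ (x2 n) = (Nat.lcm 2 n : ℤ) / 2)
    (hδ3 : δ (x3 n) = (Nat.lcm 2 n : ℤ) / n) :
    (∀ x : L n, Nonneg n x → 0 ≤ δ x) ∧
    (∀ x : L n, Nonneg n x → δ x = 0 → x = 0) := by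
  have hmpos : 0 < (Nat.lcm 2 n : ℤ) := by
    exact_mod_cast Nat.pos_of_ne_zero (Nat.lcm_ne_zero (by norm_num) (by omega))
  obtain ⟨a, ha⟩ : (2:ℤ) ∣ (Nat.lcm 2 n : ℤ) := by
    exact_mod_cast Int.natCast_dvd_natCast.mpr (Nat.dvd_lcm_left 2 n)
  obtain ⟨b, hb⟩ : ((n:ℤ)) ∣ (Nat.lcm 2 n : ℤ) := by
    exact_mod_cast Int.natCast_dvd_natCast.mpr (Nat.dvd_lcm_right 2 n)
  have hapos : 0 < a := by nlinarith
  have hbpos : 0 < b := by nlinarith [show (2:ℤ) ≤ (n:ℤ) from by exact_mod_cast hn]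
  have hda : (Nat.lcm 2 n : ℤ) / 2 = a := by rw [ha]; exact Int.mul_ediv_cancel_left a (by norm_num)
  have hdb : (Nat.lcm 2 n : ℤ) / n = b := by
    rw [hb]; exact Int.mul_ediv_cancel_left b (by positivity)
  have key : ∀ l1 l2 l3 l : ℤ, δ (l1 • x1 n + l2 • x2 n + l3 • x3 n + l • cc n)
      = l1 * a + l2 * a + l3 * b + l * (2 * a) := by
    intro l1 l2 l3 l
    simp only [cc, map_add, map_zsmul, hδ1, hδ2, hδ3, hda, hdb, smul_eq_mul]
    try ring
  constructor
  · rintro x ⟨l1, l2, l3, l, h1, _, h2, _, h3, _, h4, rfl⟩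
    rw [key]
    have := mul_nonneg h1 hapos.le
    have := mul_nonneg h2 hapos.le
    have := mul_nonneg h3 hbpos.le
    have := mul_nonneg h4 (by positivity : (0:ℤ) ≤ 2 * a)
    linarith
  · rintro x ⟨l1, l2, l3, l, h1, _, h2, _, h3, _, h4, rfl⟩ hz
    rw [key] at hz
    have t1 := mul_nonneg h1 hapos.le
    have t2 := mul_nonneg h2 hapos.le
    have t3 := mul_nonneg h3 hbpos.le
    have t4 := mul_nonneg h4 (by positivity : (0:ℤ) ≤ 2 * a)
    have z1 : l1 * a = 0 := by linarith
    have z2 : l2 * a = 0 := by linarith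
    have z3 : l3 * b = 0 := by linarith
    have z4 : l * (2 * a) = 0 := by linarith
    have e1 : l1 = 0 := (mul_eq_zero.mp z1).resolve_right (by omega)
    have e2 : l2 = 0 := (mul_eq_zero.mp z2).resolve_right (by omega)
    have e3 : l3 = 0 := (mul_eq_zero.mp z3).resolve_right (by omega)
    have e4 : l = 0 := (mul_eq_zero.mp z4).resolve_right (by omega)
    simp [e1, e2, e3, e4]
end
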